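/- Let (P_n) be strongly invariant for the system (A). The pair (A,P) is polynomially dichotomic (i.e., (h,k)-dichotomic for the rates h_m = (m+1)^α, k_m = (m+1)^β for some α, β > 0) if and only if there exist a sequence of norms 𝒩 = {|||·|||_n : n ∈ ℕ} compatible with (P_n), real constants α, β > 0 and a nondecreasing sequence s : ℕ → [1,∞) such that (m+1)^α|||A_m^n P_n x|||_m ≤ s_n (n+1)^α|||x|||_n and (m+1)^β|||B_m^n Q_m x|||_n ≤ s_m (n+1)^β|||x|||_m for all m ≥ n and all x ∈ X. -/

import Mathlib

open ContinuousLinearMap Filter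

noncomputable section

variable {X : Type*} [NormedAddCommGroup X] [NormedSpace ℝ X]

/-- The evolution operator `A_m^n` associated to the linear difference system
`x_{n+1} = A_n x_n`: `A_m^n = A_{m-1} ⋯ A_n` for `m > n` and `A_n^n = I`. -/
def evol (A : ℕ → X →L[ℝ] X) : ℕ → ℕ → X →L[ℝ] X
  | 0, _ => 1
  | m + 1, n => if m + 1 ≤ n then 1 else A m ∘L evol A m n

/-- `P` is a projectors sequence. -/
def ProjSeq (P : ℕ → X →L[ℝ] X) : Prop := ∀ n, P n ∘L P n = P n

/-- The projectors sequence `P` is invariant for the system `(A)`. -/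
def InvariantFor (A P : ℕ → X →L[ℝ] X) : Prop := ∀ n, A n ∘L P n = P (n + 1) ∘L A n

/-- The projectors sequence `P` is strongly invariant for the system `(A)`: it is invariant and
the restriction of `A_m^n` to `Ker P_n` is an isomorphism from `Ker P_n` onto `Ker P_m`. -/
def StronglyInvariantFor (A P : ℕ → X →L[ℝ] X) : Prop :=
  InvariantFor A P ∧ ∀ m n : ℕ, n ≤ m →
    Set.BijOn (evol A m n) (LinearMap.ker (P n : X →ₗ[ℝ] X) : Set X) (LinearMap.ker (P m : X →ₗ[ℝ] X))

/-- A growth rate: an increasing sequence with values in `[1, ∞)` tending to `∞`. -/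
def IsGrowthRate (h : ℕ → ℝ) : Prop :=
  StrictMono h ∧ (∀ n, 1 ≤ h n) ∧ Tendsto h atTop atTop

/-- The pair `(A, P)` is `(h,k)`-dichotomic. -/
def Dichotomic (A P : ℕ → X →L[ℝ] X) (h k : ℕ → ℝ) : Prop :=
  ∃ d : ℕ → ℝ, (∀ n, 1 ≤ d n) ∧ Monotone d ∧
    ∀ m n : ℕ, n ≤ m → ∀ x : X,
      h m * ‖evol A m n (P n x)‖ ≤ d n * (h n * ‖P n x‖) ∧
      k m * ‖(1 - P n) x‖ ≤ d m * (k n * ‖evol A m n ((1 - P n) x)‖)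

/-- The pair `(A, P)` is uniformly `(h,k)`-dichotomic. -/
def UniformDichotomic (A P : ℕ → X →L[ℝ] X) (h k : ℕ → ℝ) : Prop :=
  ∃ d : ℝ, 1 ≤ d ∧
    ∀ m n : ℕ, n ≤ m → ∀ x : X,
      h m * ‖evol A m n (P n x)‖ ≤ d * (h n * ‖P n x‖) ∧
      k m * ‖(1 - P n) x‖ ≤ d * (k n * ‖evol A m n ((1 - P n) x)‖)

/-- The pair `(A, P)` has `(h,k)`-growth. -/
def HasGrowth (A P : ℕ → X →L[ℝ] X) (h k : ℕ → ℝ) : Prop :=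
  ∃ g : ℕ → ℝ, (∀ n, 1 ≤ g n) ∧ Monotone g ∧
    ∀ m n : ℕ, n ≤ m → ∀ x : X,
      h n * ‖evol A m n (P n x)‖ ≤ g n * (h m * ‖P n x‖) ∧
      k n * ‖(1 - P n) x‖ ≤ g m * (k m * ‖evol A m n ((1 - P n) x)‖)

/-- `N` is a sequence of norms on `X`. -/
def IsNormSeq (N : ℕ → X → ℝ) : Prop :=
  ∀ n, (∀ x y, N n (x + y) ≤ N n x + N n y) ∧
    (∀ (a : ℝ) (x : X), N n (a • x) = |a| * N n x) ∧
    (∀ x, N n x = 0 ↔ x = 0)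

/-- The sequence of norms `N` is compatible with the projectors sequence `P`. -/
def NormsCompatible (N : ℕ → X → ℝ) (P : ℕ → X →L[ℝ] X) : Prop :=
  IsNormSeq N ∧ ∃ c : ℕ → ℝ, (∀ n, 1 ≤ c n) ∧ Monotone c ∧
    ∀ (n : ℕ) (x : X), ‖x‖ ≤ N n x ∧ N n x ≤ c n * (‖P n x‖ + ‖(1 - P n) x‖)

/-- The defining properties of the skew-evolution operator `B` associated to the pair `(A, P)`:
`A_m^n B_m^n Q_m = Q_m`, `B_m^n A_m^n Q_n = Q_n` and `B_m^n Q_m = Q_n B_m^n Q_m` for `m ≥ n`,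
where `Q_n = I - P_n`. -/
def SkewEvol (A P : ℕ → X →L[ℝ] X) (B : ℕ → ℕ → X →L[ℝ] X) : Prop :=
  ∀ m n : ℕ, n ≤ m →
    evol A m n ∘L (B m n ∘L (1 - P m)) = 1 - P m ∧
    B m n ∘L (evol A m n ∘L (1 - P n)) = 1 - P n ∧
    B m n ∘L (1 - P m) = (1 - P n) ∘L (B m n ∘L (1 - P m))

/-!
For `⇒` take `|||·|||_n = ‖·‖`: the factors `‖P_n‖` and `‖Q_n‖` are absorbed into a nondecreasing
majorant of `d_n (‖P_n‖ + ‖Q_n‖)`, and the unstable estimate is the dichotomy inequality applied to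
`B_m^n Q_m x ∈ Ker P_n`, which `A_m^n` maps back to `Q_m x`.
For `⇐`, a compatible norm satisfies `‖z‖ ≤ |||z|||_n ≤ c_n ‖z‖` on `Im P_n` and on `Ker P_n`, and
by invariance `A_m^n` maps `Ker P_n` into `Ker P_m`; hence `d_n = s_n c_n` works.
-/

lemma exists_monotone_one_le_majorant (t : ℕ → ℝ) :
    ∃ s : ℕ → ℝ, (∀ n, 1 ≤ s n) ∧ Monotone s ∧ ∀ n, t n ≤ s n :=
  ⟨fun n => max 1 (partialSups t n), fun _ => le_max_left _ _,
    fun _ _ hab => max_le_max le_rfl ((partialSups t).monotone hab),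
    fun n => (le_partialSups t n).trans (le_max_right _ _)⟩

lemma evol_self (A : ℕ → X →L[ℝ] X) (n : ℕ) : evol A n n = 1 := by
  cases n <;> simp [evol]

lemma evol_succ (A : ℕ → X →L[ℝ] X) {m n : ℕ} (h : n ≤ m) :
    evol A (m + 1) n = A m ∘L evol A m n := by
  simp [evol, show ¬m + 1 ≤ n by omega]

lemma le_mul_norm_of_compl_eq_zero {p : X →L[ℝ] X} {ν : X → ℝ} {c : ℝ}
    (hν : ∀ x, ν x ≤ c * (‖p x‖ + ‖(1 - p) x‖)) {z : X} (hz : (1 - p) z = 0) :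
    ν z ≤ c * ‖z‖ := by
  have hpz : p z = z := (sub_eq_zero.mp (by simpa using hz)).symm
  simpa [hz, hpz] using hν z

lemma le_mul_norm_of_proj_eq_zero {p : X →L[ℝ] X} {ν : X → ℝ} {c : ℝ}
    (hν : ∀ x, ν x ≤ c * (‖p x‖ + ‖(1 - p) x‖)) {z : X} (hz : p z = 0) :
    ν z ≤ c * ‖z‖ := by
  simpa [hz] using hν z

lemma normsCompatible_norm (P : ℕ → X →L[ℝ] X) : NormsCompatible (fun _ x => ‖x‖) P := by
  refine ⟨fun _ => ⟨norm_add_le, norm_smul, fun _ => norm_eq_zero⟩,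
    fun _ => 1, fun _ => le_rfl, monotone_const, fun n x => ⟨le_rfl, ?_⟩⟩
  calc ‖x‖ = ‖P n x + (1 - P n) x‖ := by simp
    _ ≤ 1 * (‖P n x‖ + ‖(1 - P n) x‖) := by rw [one_mul]; exact norm_add_le _ _

variable {A P : ℕ → X →L[ℝ] X} {B : ℕ → ℕ → X →L[ℝ] X} {h k : ℕ → ℝ}

lemma InvariantFor.evol_comp (hI : InvariantFor A P) {m n : ℕ} (hnm : n ≤ m) :
    evol A m n ∘L P n = P m ∘L evol A m n := by
  induction m, hnm using Nat.le_induction with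
  | base => ext; simp [evol_self]
  | succ m hm ih =>
    rw [evol_succ A hm, comp_assoc, ih, ← comp_assoc, hI m, comp_assoc]

lemma ProjSeq.apply_apply (hP : ProjSeq P) (n : ℕ) (x : X) : P n (P n x) = P n x :=
  DFunLike.congr_fun (hP n) x

lemma ProjSeq.apply_compl_apply (hP : ProjSeq P) (n : ℕ) (x : X) : P n ((1 - P n) x) = 0 := by
  simp [hP.apply_apply]

lemma ProjSeq.compl_apply_apply (hP : ProjSeq P) (n : ℕ) (x : X) : (1 - P n) (P n x) = 0 := by
  simp [hP.apply_apply]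

lemma ProjSeq.proj_evol_compl_apply (hP : ProjSeq P) (hI : InvariantFor A P) {m n : ℕ}
    (hnm : n ≤ m) (x : X) : P m (evol A m n ((1 - P n) x)) = 0 := by
  rw [← comp_apply (P m), ← hI.evol_comp hnm, comp_apply, hP.apply_compl_apply, map_zero]

def DichotomicWrtNorms (A P : ℕ → X →L[ℝ] X) (B : ℕ → ℕ → X →L[ℝ] X) (N : ℕ → X → ℝ)
    (h k : ℕ → ℝ) : Prop :=
  ∃ s : ℕ → ℝ, (∀ n, 1 ≤ s n) ∧ Monotone s ∧
    ∀ m n : ℕ, n ≤ m → ∀ x : X,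
      h m * N m (evol A m n (P n x)) ≤ s n * (h n * N n x) ∧
      k m * N n (B m n ((1 - P m) x)) ≤ s m * (k n * N m x)

lemma Dichotomic.dichotomicWrtNorms_norm (hD : Dichotomic A P h k) (hB : SkewEvol A P B)
    (hh : ∀ n, 0 ≤ h n) (hk : ∀ n, 0 ≤ k n) :
    DichotomicWrtNorms A P B (fun _ x => ‖x‖) h k := by
  obtain ⟨d, hd₁, -, hd⟩ := hD
  have hd₀ : ∀ n, 0 ≤ d n := fun n => zero_le_one.trans (hd₁ n)
  obtain ⟨s, hs₁, hs, hds⟩ := exists_monotone_one_le_majorant (fun n => d n * (‖P n‖ + ‖1 - P n‖))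
  have hdP : ∀ n, d n * ‖P n‖ ≤ s n := fun n =>
    (mul_le_mul_of_nonneg_left (le_add_of_nonneg_right (norm_nonneg _)) (hd₀ n)).trans (hds n)
  have hdQ : ∀ n, d n * ‖1 - P n‖ ≤ s n := fun n =>
    (mul_le_mul_of_nonneg_left (le_add_of_nonneg_left (norm_nonneg _)) (hd₀ n)).trans (hds n)
  refine ⟨s, hs₁, hs, fun m n hmn x => ⟨?_, ?_⟩⟩
  · calc h m * ‖evol A m n (P n x)‖ ≤ d n * (h n * ‖P n x‖) := (hd m n hmn x).1
      _ ≤ d n * (h n * (‖P n‖ * ‖x‖)) := by gcongr; exacts [hd₀ n, hh n, (P n).le_opNorm x]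
      _ = d n * ‖P n‖ * (h n * ‖x‖) := by ring
      _ ≤ s n * (h n * ‖x‖) := by gcongr; exacts [mul_nonneg (hh n) (norm_nonneg x), hdP n]
  · obtain ⟨hAB, -, hQB⟩ := hB m n hmn
    set y := B m n ((1 - P m) x)
    have hQy : (1 - P n) y = y := (DFunLike.congr_fun hQB x).symm
    have hAy : evol A m n y = (1 - P m) x := DFunLike.congr_fun hAB x
    calc k m * ‖y‖ ≤ d m * (k n * ‖(1 - P m) x‖) := by
          simpa only [hQy, hAy] using (hd m n hmn y).2
      _ ≤ d m * (k n * (‖1 - P m‖ * ‖x‖)) := by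
          gcongr; exacts [hd₀ m, hk n, (1 - P m).le_opNorm x]
      _ = d m * ‖1 - P m‖ * (k n * ‖x‖) := by ring
      _ ≤ s m * (k n * ‖x‖) := by gcongr; exacts [mul_nonneg (hk n) (norm_nonneg x), hdQ m]

lemma DichotomicWrtNorms.dichotomic {N : ℕ → X → ℝ} (hND : DichotomicWrtNorms A P B N h k)
    (hN : NormsCompatible N P) (hP : ProjSeq P) (hI : InvariantFor A P) (hB : SkewEvol A P B)
    (hh : ∀ n, 0 ≤ h n) (hk : ∀ n, 0 ≤ k n) : Dichotomic A P h k := by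
  obtain ⟨-, c, hc₁, hc, hNc⟩ := hN
  obtain ⟨s, hs₁, hs, hsN⟩ := hND
  have hs₀ : ∀ n, 0 ≤ s n := fun n => zero_le_one.trans (hs₁ n)
  have hc₀ : ∀ n, 0 ≤ c n := fun n => zero_le_one.trans (hc₁ n)
  refine ⟨s * c, fun n => one_le_mul_of_one_le_of_one_le (hs₁ n) (hc₁ n), hs.mul hc hs₀ hc₀,
    fun m n hmn x => ⟨?_, ?_⟩⟩
  · have hNPx : N n (P n x) ≤ c n * ‖P n x‖ :=
      le_mul_norm_of_compl_eq_zero (fun z => (hNc n z).2) (hP.compl_apply_apply n x)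
    calc h m * ‖evol A m n (P n x)‖ ≤ h m * N m (evol A m n (P n x)) := by
          gcongr; exacts [hh m, (hNc m _).1]
      _ ≤ s n * (h n * N n (P n x)) := by
          simpa only [hP.apply_apply] using (hsN m n hmn (P n x)).1
      _ ≤ s n * (h n * (c n * ‖P n x‖)) := by gcongr; exacts [hs₀ n, hh n]
      _ = s n * c n * (h n * ‖P n x‖) := by ring
  · set y := evol A m n ((1 - P n) x)
    have hPy : P m y = 0 := hP.proj_evol_compl_apply hI hmn x
    have hQy : (1 - P m) y = y := by simp [hPy]
    have hBy : B m n ((1 - P m) y) = (1 - P n) x := by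
      rw [hQy]; exact DFunLike.congr_fun (hB m n hmn).2.1 x
    have hNy : N m y ≤ c m * ‖y‖ := le_mul_norm_of_proj_eq_zero (fun z => (hNc m z).2) hPy
    calc k m * ‖(1 - P n) x‖ ≤ k m * N n ((1 - P n) x) := by
          gcongr; exacts [hk m, (hNc n _).1]
      _ ≤ s m * (k n * N m y) := by simpa only [hBy] using (hsN m n hmn y).2
      _ ≤ s m * (k n * (c m * ‖y‖)) := by gcongr; exacts [hs₀ m, hk n]
      _ = s m * c m * (k n * ‖y‖) := by ring

theorem stmt_15_general (A P : ℕ → X →L[ℝ] X) (B : ℕ → ℕ → X →L[ℝ] X)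
    (hP : ProjSeq P) (hSI : StronglyInvariantFor A P) (hB : SkewEvol A P B) :
    (∃ α β : ℝ, 0 < α ∧ 0 < β ∧
      Dichotomic A P (fun m => ((m : ℝ) + 1) ^ α) (fun m => ((m : ℝ) + 1) ^ β)) ↔
      ∃ N : ℕ → X → ℝ, NormsCompatible N P ∧ ∃ α β : ℝ, 0 < α ∧ 0 < β ∧
        ∃ s : ℕ → ℝ, (∀ n, 1 ≤ s n) ∧ Monotone s ∧
          ∀ m n : ℕ, n ≤ m → ∀ x : X,
            ((m : ℝ) + 1) ^ α * N m (evol A m n (P n x)) ≤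
              s n * (((n : ℝ) + 1) ^ α * N n x) ∧
            ((m : ℝ) + 1) ^ β * N n (B m n ((1 - P m) x)) ≤
              s m * (((n : ℝ) + 1) ^ β * N m x) := by
  have rate_nonneg (γ : ℝ) (n : ℕ) : 0 ≤ ((n : ℝ) + 1) ^ γ := by positivity
  constructor
  · rintro ⟨α, β, hα, hβ, hD⟩
    exact ⟨_, normsCompatible_norm P, α, β, hα, hβ,
      hD.dichotomicWrtNorms_norm hB (rate_nonneg α) (rate_nonneg β)⟩
  · rintro ⟨N, hN, α, β, hα, hβ, hND⟩
    exact ⟨α, β, hα, hβ,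
      DichotomicWrtNorms.dichotomic hND hN hP hSI.1 hB (rate_nonneg α) (rate_nonneg β)⟩

theorem stmt_15 [CompleteSpace X] (A P : ℕ → X →L[ℝ] X) (B : ℕ → ℕ → X →L[ℝ] X)
    (hP : ProjSeq P) (hSI : StronglyInvariantFor A P) (hB : SkewEvol A P B) :
    (∃ α β : ℝ, 0 < α ∧ 0 < β ∧
      Dichotomic A P (fun m => ((m : ℝ) + 1) ^ α) (fun m => ((m : ℝ) + 1) ^ β)) ↔
      ∃ N : ℕ → X → ℝ, NormsCompatible N P ∧ ∃ α β : ℝ, 0 < α ∧ 0 < β ∧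
        ∃ s : ℕ → ℝ, (∀ n, 1 ≤ s n) ∧ Monotone s ∧
          ∀ m n : ℕ, n ≤ m → ∀ x : X,
            ((m : ℝ) + 1) ^ α * N m (evol A m n (P n x)) ≤
              s n * (((n : ℝ) + 1) ^ α * N n x) ∧
            ((m : ℝ) + 1) ^ β * N n (B m n ((1 - P m) x)) ≤
              s m * (((n : ℝ) + 1) ^ β * N m x) :=
  stmt_15_general A P B hP hSI hB

end
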